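/- arXiv:1812.01800 — 2 statements merged into one kernel-verified Lean document; each statement's English description precedes it below -/
import Mathlib

section
/- Every round decomposable local tournament has a Sullivan-2 vertex. -/
/-- The out-neighbourhood of `x` in the digraph with arc relation `A`. -/
def Nplus {V : Type*} (A : V → V → Prop) (x : V) : Set V := {y | A x y}

/-- The in-neighbourhood of `x`. -/
def Nminus {V : Type*} (A : V → V → Prop) (x : V) : Set V := {y | A y x}

/-- The second out-neighbourhood of `x`:
`(⋃ u ∈ N⁺(x), N⁺(u)) \ N⁺(x)`. -/
def Nsecond {V : Type*} (A : V → V → Prop) (x : V) : Set V :=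
  (⋃ u ∈ Nplus A x, Nplus A u) \ Nplus A x

/-- Out-degree `d⁺(x)`. -/
noncomputable def dplus {V : Type*} (A : V → V → Prop) (x : V) : ℕ := (Nplus A x).ncard

/-- In-degree `d⁻(x)`. -/
noncomputable def dminus {V : Type*} (A : V → V → Prop) (x : V) : ℕ := (Nminus A x).ncard

/-- Second out-degree `d⁺⁺(x)`. -/
noncomputable def dsecond {V : Type*} (A : V → V → Prop) (x : V) : ℕ := (Nsecond A x).ncard

/-- `x` is a Sullivan-1 vertex: `d⁺⁺(x) ≥ d⁻(x)`. -/
def Sullivan1 {V : Type*} (A : V → V → Prop) (x : V) : Prop :=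
  dminus A x ≤ dsecond A x

/-- `x` is a Sullivan-2 vertex: `d⁺⁺(x) + d⁺(x) ≥ 2·d⁻(x)`. -/
def Sullivan2 {V : Type*} (A : V → V → Prop) (x : V) : Prop :=
  2 * dminus A x ≤ dsecond A x + dplus A x

/-- Two vertices are adjacent if there is an arc between them in some direction. -/
def Adjacent {V : Type*} (A : V → V → Prop) (x y : V) : Prop := A x y ∨ A y x

/-- An oriented graph: no loops and no 2-cycles. -/
def IsOriented {V : Type*} (A : V → V → Prop) : Prop :=
  (∀ x, ¬ A x x) ∧ ∀ x y, A x y → ¬ A y x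

/-- A local tournament: an oriented graph in which any two distinct out-neighbours
of a vertex are adjacent, and any two distinct in-neighbours are adjacent. -/
def IsLocalTournament {V : Type*} (A : V → V → Prop) : Prop :=
  IsOriented A ∧
  (∀ x y z, A x y → A x z → y ≠ z → Adjacent A y z) ∧
  (∀ x y z, A y x → A z x → y ≠ z → Adjacent A y z)

/-- A tournament: an oriented graph in which any two distinct vertices are adjacent. -/
def IsTournament {V : Type*} (A : V → V → Prop) : Prop :=
  IsOriented A ∧ ∀ x y : V, x ≠ y → Adjacent A x y

/-- A digraph is strong if every vertex can reach every other by a directed path. -/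
def IsStrong {V : Type*} (A : V → V → Prop) : Prop :=
  ∀ x y : V, Relation.ReflTransGen A x y

/-- A digraph on `ZMod r` is roundly labelled (by the natural labelling `0,1,…,r-1`)
if for each vertex `i` the out-neighbourhood is `{i+1, …, i+d⁺(i)}` and the
in-neighbourhood is `{i−d⁻(i), …, i−1}` (indices modulo `r`). -/
def IsRoundLabelling {r : ℕ} (B : ZMod r → ZMod r → Prop) : Prop :=
  ∀ i : ZMod r,
    Nplus B i = (fun t : ℕ => i + (t : ZMod r)) '' Set.Icc 1 (dplus B i) ∧
    Nminus B i = (fun t : ℕ => i - (t : ZMod r)) '' Set.Icc 1 (dminus B i)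

/-- A digraph is round if its vertices admit a round labelling. -/
def IsRound {V : Type*} (A : V → V → Prop) : Prop :=
  ∃ r : ℕ, 0 < r ∧ ∃ e : ZMod r ≃ V,
    IsRoundLabelling (fun i j => A (e i) (e j))

/-- A digraph `A` on `V` is round decomposable: `A = R[S₁,…,S_r]` where `R` is a
round local tournament on `r ≥ 2` vertices (realized on `ZMod r`), the parts are
the fibres of a surjection `φ : V → ZMod r` (so all parts are nonempty and pairwise
disjoint), arcs between distinct parts are exactly those induced by `R`, and each
part induces a strong tournament. -/
def IsRoundDecomposable {V : Type*} (A : V → V → Prop) : Prop :=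
  ∃ (r : ℕ) (B : ZMod r → ZMod r → Prop) (φ : V → ZMod r),
    2 ≤ r ∧ IsLocalTournament B ∧ IsRound B ∧ Function.Surjective φ ∧
    (∀ x y, φ x ≠ φ y → (A x y ↔ B (φ x) (φ y))) ∧
    (∀ x y, φ x = φ y → x ≠ y → Adjacent A x y) ∧
    (∀ i : ZMod r, ∀ x y, φ x = i → φ y = i →
      Relation.ReflTransGen (fun a b => A a b ∧ φ a = i ∧ φ b = i) x y)


/-!
In a tournament, a vertex `x` of maximum out-degree is Sullivan-2: `d⁻(x) ≤ d⁺(x)` because the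
maximum is at least the average, and every in-neighbour `y` of `x` is a second out-neighbour,
since otherwise `y` would dominate `x` and all of `N⁺(x)`.

For `D = R[S₁, …, S_r]`, take such a vertex `x` of a part `S_i`. Its neighbourhoods in `D` are
those in `S_i` together with the parts over `N⁻(i)`, `N⁺(i)` and `N⁺⁺(i)` in `R`, so it remains
to find `i` with `2 w(N⁻(i)) ≤ w(N⁺(i)) + w(N⁺⁺(i))`, where `w(T) = ∑_{j ∈ T} |S_j|`.
In the round order, `N⁻(y)` is the arc `[σ y, y)` with `σ y = y - d⁻(y)`, `N⁺(x)` is the arc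
`(x, x + d⁺(x)]`, and the out-neighbourhood of the last out-neighbour `x + d⁺(x)` lies in
`N⁺⁺(x)`. Because `R` is a local tournament, for `x = σ y` the arc `(x, y]` lies in `N⁺(x)` and
the arc `(x, y + d⁺(y)]` in `N⁺(x) ∪ N⁺(x + d⁺(x))`. Adding up the weights, the quantity
`L y = 2 w(N⁻(y)) + 2 |S_y| + w(N⁺(y))` is at most `M (σ y)`, where
`M x = 2 |S_x| + 2 w(N⁺(x)) + w(N⁺(x + d⁺(x)))`. Summing over a cycle of `σ` gives a vertex
with `L x ≤ M x`, which is the required inequality.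
-/

open Finset

theorem exists_le_of_le_comp {α β : Type*} [Finite α] [Nonempty α] [AddCommMonoid β]
    [LinearOrder β] [IsOrderedCancelAddMonoid β] (f : α → α) {L R : α → β}
    (h : ∀ y, L y ≤ R (f y)) : ∃ x, L x ≤ R x := by
  obtain ⟨x₀⟩ := ‹Nonempty α›
  obtain ⟨a, b, hab, he⟩ := Finite.exists_ne_map_eq_of_infinite (fun k : ℕ => f^[k] x₀)
  wlog hlt : a < b generalizing a b
  · exact this b a hab.symm he.symm (by omega)
  set z := f^[a] x₀
  have hz : f^[b - a] z = z := by
    simp only [z, ← Function.iterate_add_apply, Nat.sub_add_cancel hlt.le]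
    exact he.symm
  have hsum : ∑ k ∈ range (b - a), L (f^[k] z) ≤ ∑ k ∈ range (b - a), R (f^[k] z) :=
    calc ∑ k ∈ range (b - a), L (f^[k] z)
        ≤ ∑ k ∈ range (b - a), R (f^[k + 1] z) := by
          gcongr with k
          rw [Function.iterate_succ_apply']
          exact h _
      _ = ∑ k ∈ range (b - a), R (f^[k] z) := by
          rw [← add_left_inj (R z)]
          exact (sum_range_succ' (fun k => R (f^[k] z)) _).symm.trans (by rw [sum_range_succ, hz])
  obtain ⟨k, -, hk⟩ := exists_le_of_sum_le (nonempty_range_iff.mpr (by omega)) hsum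
  exact ⟨_, hk⟩

section Tournament

variable {V : Type*} {A : V → V → Prop}

theorem sum_dplus_eq_sum_dminus [Fintype V] : ∑ x, dplus A x = ∑ x, dminus A x := by
  classical
  have key := sum_card_bipartiteAbove_eq_sum_card_bipartiteBelow (s := univ) (t := univ) (r := A)
  convert key using 2 with x _ x _ <;>
    simp [dplus, dminus, Nplus, Nminus, bipartiteAbove, bipartiteBelow, Set.ncard_eq_toFinset_card']

namespace IsTournament

variable [Finite V] (hA : IsTournament A)
include hA

theorem dminus_add_dplus (x : V) : dminus A x + dplus A x + 1 = Nat.card V := by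
  have : Nonempty V := ⟨x⟩
  have hdisj : Disjoint (Nminus A x) (Nplus A x) :=
    Set.disjoint_left.mpr fun y hyx hxy => hA.1.2 _ _ hyx hxy
  have hunion : Nminus A x ∪ Nplus A x = {x}ᶜ := by
    ext y
    simp only [Set.mem_union, Nminus, Nplus, Set.mem_compl_singleton_iff]
    constructor
    · rintro (h | h) rfl <;> exact hA.1.1 _ h
    · exact hA.2 y x
  rw [dminus, dplus, ← Set.ncard_union_eq hdisj, hunion, Set.ncard_compl,
    Set.ncard_singleton, Nat.sub_add_cancel Nat.card_pos]

theorem nminus_subset_nsecond_of_forall_dplus_le {x : V} (hmax : ∀ y, dplus A y ≤ dplus A x) :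
    Nminus A x ⊆ Nsecond A x := by
  intro y hyx
  refine ⟨?_, hA.1.2 _ _ hyx⟩
  by_contra hno
  simp only [Set.mem_iUnion₂, not_exists] at hno
  have hsub : insert x (Nplus A x) ⊆ Nplus A y := by
    rintro z (rfl | hxz)
    · exact hyx
    · have hzy : z ≠ y := by
        rintro rfl
        exact hA.1.2 _ _ hyx hxz
      exact (hA.2 z y hzy).resolve_left (hno z hxz)
  have hcard := Set.ncard_le_ncard hsub
  rw [Set.ncard_insert_of_notMem (s := Nplus A x) (hA.1.1 x)] at hcard
  exact absurd (hmax y) (by unfold dplus; omega)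

theorem dminus_le_dplus_of_forall_dplus_le {x : V} (hmax : ∀ y, dplus A y ≤ dplus A x) :
    dminus A x ≤ dplus A x := by
  have : Fintype V := Fintype.ofFinite V
  obtain ⟨z, -, hz⟩ := exists_le_of_sum_le (univ_nonempty_iff.mpr ⟨x⟩)
    (sum_dplus_eq_sum_dminus (A := A)).symm.le
  have := hA.dminus_add_dplus x
  have := hA.dminus_add_dplus z
  have := hmax z
  omega

theorem exists_sullivan2 [Nonempty V] : ∃ x, Sullivan2 A x := by
  obtain ⟨x, hmax⟩ := Finite.exists_max (dplus A)
  have hsecond : dminus A x ≤ dsecond A x :=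
    Set.ncard_le_ncard (hA.nminus_subset_nsecond_of_forall_dplus_le hmax)
  exact ⟨x, by unfold Sullivan2; linarith [hA.dminus_le_dplus_of_forall_dplus_le hmax]⟩

end IsTournament
end Tournament

theorem IsOriented.self_notMem_nsecond {V : Type*} {A : V → V → Prop} (hA : IsOriented A)
    (x : V) : x ∉ Nsecond A x := by
  rintro ⟨hx, -⟩
  obtain ⟨u, hxu, hux⟩ := Set.mem_iUnion₂.mp hx
  exact hA.2 _ _ hxu hux

def induce {V : Type*} (A : V → V → Prop) (S : Set V) : S → S → Prop := fun a b => A a b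

def WeightedSullivan2 {V W : Type*} (B : W → W → Prop) (φ : V → W) (i : W) : Prop :=
  2 * (φ ⁻¹' Nminus B i).ncard ≤ (φ ⁻¹' Nplus B i).ncard + (φ ⁻¹' Nsecond B i).ncard

section Composition

variable {V W : Type*} {A : V → V → Prop} {B : W → W → Prop} {φ : V → W} {i : W}

theorem IsOriented.isTournament_induce (hA : IsOriented A) {S : Set V}
    (hS : ∀ x ∈ S, ∀ y ∈ S, x ≠ y → Adjacent A x y) : IsTournament (induce A S) :=
  ⟨⟨fun x => hA.1 x, fun x y => hA.2 x y⟩,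
    fun x y hxy => hS x x.2 y y.2 (Subtype.coe_ne_coe.mpr hxy)⟩

theorem ncard_image_union_preimage [Finite V] {T : Set W} (hi : i ∉ T) (s : Set (φ ⁻¹' {i})) :
    (Subtype.val '' s ∪ φ ⁻¹' T).ncard = s.ncard + (φ ⁻¹' T).ncard := by
  rw [Set.ncard_union_eq, Set.ncard_image_of_injective _ Subtype.val_injective]
  exact Set.disjoint_left.mpr fun _ ⟨y, _, hy⟩ hyT => hi (y.2 ▸ hy ▸ hyT)

variable (hcross : ∀ x y, φ x ≠ φ y → (A x y ↔ B (φ x) (φ y)))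
include hcross

theorem nplus_eq_image_union_preimage (hirr : ∀ i, ¬ B i i) (x : φ ⁻¹' {i}) :
    Nplus A x = Subtype.val '' Nplus (induce A (φ ⁻¹' {i})) x ∪ φ ⁻¹' Nplus B i := by
  obtain ⟨x, rfl : φ x = i⟩ := x
  ext y
  by_cases hy : φ y = φ x
  · simp [Nplus, induce, hy, hirr]
  · simp [Nplus, induce, hy, hcross x y (Ne.symm hy)]

theorem nminus_eq_image_union_preimage (hirr : ∀ i, ¬ B i i) (x : φ ⁻¹' {i}) :
    Nminus A x = Subtype.val '' Nminus (induce A (φ ⁻¹' {i})) x ∪ φ ⁻¹' Nminus B i :=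
  nplus_eq_image_union_preimage (A := flip A) (B := flip B) (fun x y h => hcross y x h.symm)
    hirr x

theorem image_union_preimage_subset_nsecond (hB : IsOriented B) (hφ : Function.Surjective φ)
    (x : φ ⁻¹' {i}) :
    Subtype.val '' Nsecond (induce A (φ ⁻¹' {i})) x ∪ φ ⁻¹' Nsecond B i ⊆
      Nsecond A x := by
  obtain ⟨x, rfl : φ x = i⟩ := x
  rintro y (⟨y, ⟨hy, hxy⟩, rfl⟩ | ⟨hy, hxy⟩)
  · obtain ⟨u, hxu, huy⟩ := Set.mem_iUnion₂.mp hy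
    exact ⟨Set.mem_biUnion (x := u.1) hxu huy, hxy⟩
  · obtain ⟨j, hxj, hjy⟩ := Set.mem_iUnion₂.mp hy
    obtain ⟨u, rfl⟩ := hφ j
    have hyx : φ y ≠ φ x := fun h => hB.2 _ _ hxj (h ▸ hjy)
    have hxu : φ x ≠ φ u := fun h => hB.1 _ (h ▸ hxj)
    have huy : φ u ≠ φ y := fun h => hB.1 _ (h ▸ hjy)
    exact ⟨Set.mem_biUnion ((hcross _ _ hxu).2 hxj) ((hcross _ _ huy).2 hjy),
      fun h => hxy ((hcross _ _ hyx.symm).1 h)⟩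

theorem Sullivan2.of_induce [Finite V] (hB : IsOriented B) (hφ : Function.Surjective φ)
    {x : φ ⁻¹' {i}} (hx : Sullivan2 (induce A (φ ⁻¹' {i})) x) (hi : WeightedSullivan2 B φ i) :
    Sullivan2 A x := by
  have hminus : dminus A x = dminus (induce A _) x + (φ ⁻¹' Nminus B i).ncard := by
    rw [dminus, nminus_eq_image_union_preimage hcross hB.1,
      ncard_image_union_preimage (T := Nminus B i) (hB.1 i)]
    rfl
  have hplus : dplus A x = dplus (induce A _) x + (φ ⁻¹' Nplus B i).ncard := by
    rw [dplus, nplus_eq_image_union_preimage hcross hB.1,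
      ncard_image_union_preimage (T := Nplus B i) (hB.1 i)]
    rfl
  have hsecond : dsecond (induce A _) x + (φ ⁻¹' Nsecond B i).ncard ≤ dsecond A x := by
    rw [dsecond, ← ncard_image_union_preimage (hB.self_notMem_nsecond i)]
    exact Set.ncard_le_ncard (image_union_preimage_subset_nsecond hcross hB hφ x)
  unfold Sullivan2 WeightedSullivan2 at *
  omega

end Composition

section ArcSum

variable {R : Type*} [AddCommGroupWithOne R]

def arcSum (n : R → ℕ) (a : R) (l : ℕ) : ℕ := ∑ s ∈ range l, n (a + s)

variable (n : R → ℕ) (a : R)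

theorem arcSum_add (k l : ℕ) : arcSum n a (k + l) = arcSum n a k + arcSum n (a + k) l := by
  simp [arcSum, sum_range_add, add_assoc]

theorem arcSum_succ (l : ℕ) : arcSum n a (l + 1) = arcSum n a l + n (a + l) :=
  sum_range_succ _ _

theorem arcSum_one_add (l : ℕ) : arcSum n a (1 + l) = n a + arcSum n (a + 1) l := by
  rw [arcSum_add]
  simp [arcSum]

@[gcongr]
theorem arcSum_mono {k l : ℕ} (h : k ≤ l) : arcSum n a k ≤ arcSum n a l :=
  sum_le_sum_of_subset (range_subset_range.mpr h)

theorem image_add_natCast_Icc (l : ℕ) :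
    (fun t : ℕ => a + t) '' Set.Icc 1 l = (fun s : ℕ => a + 1 + s) '' ↑(range l) := by
  ext z
  constructor
  · rintro ⟨t, ⟨h1, h2⟩, rfl⟩
    obtain ⟨s, rfl⟩ : ∃ s, t = s + 1 := ⟨t - 1, by omega⟩
    exact ⟨s, by simp; omega, by push_cast; abel⟩
  · rintro ⟨s, hs, rfl⟩
    exact ⟨s + 1, by simp at hs ⊢; omega, by push_cast; abel⟩

theorem image_sub_natCast_Icc (l : ℕ) :
    (fun t : ℕ => a - t) '' Set.Icc 1 l = (fun s : ℕ => a - l + s) '' ↑(range l) := by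
  ext z
  constructor
  · rintro ⟨t, ⟨h1, h2⟩, rfl⟩
    obtain ⟨s, rfl⟩ : ∃ s, l = t + s := ⟨l - t, by omega⟩
    exact ⟨s, by simp; omega, by push_cast; abel⟩
  · rintro ⟨s, hs, rfl⟩
    obtain ⟨t, rfl⟩ : ∃ t, l = t + s := ⟨l - s, by simp at hs; omega⟩
    exact ⟨t, by simp at hs ⊢; omega, by push_cast; abel⟩

end ArcSum

theorem ncard_preimage_image_finset {V W : Type*} [Finite V] (φ : V → W) {g : ℕ → W}
    {s : Finset ℕ} (hg : Set.InjOn g s) :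
    (φ ⁻¹' (g '' s)).ncard = ∑ t ∈ s, (φ ⁻¹' {g t}).ncard := by
  induction s using Finset.induction_on with
  | empty => simp
  | insert t s ht ih =>
    rw [coe_insert] at hg
    have hgt : g t ∉ g '' s := fun h => ht (hg.mem_of_mem_image (Set.subset_insert _ _)
      (Set.mem_insert _ _) h)
    rw [coe_insert, Set.image_insert_eq, Set.insert_eq, Set.preimage_union,
      Set.ncard_union_eq ((Set.disjoint_singleton_left.mpr hgt).preimage φ), sum_insert ht,
      ih (hg.mono (Set.subset_insert _ _))]

section Round

variable {r : ℕ}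

theorem val_add_natCast_sub_add_natCast (a : ZMod r) {t u : ℕ} (htu : t ≤ u) (hu : u < r) :
    (a + u - (a + t)).val = u - t := by
  rw [add_sub_add_left_eq_sub, ← Nat.cast_sub htu, ZMod.val_natCast_of_lt (by omega)]

/-- In a round labelling, `N⁻(y)` is the arc `[firstIn B y, y)` and `N⁺(x)` is the arc
`(x, lastOut B x]`. -/
noncomputable def firstIn (B : ZMod r → ZMod r → Prop) (y : ZMod r) : ZMod r := y - dminus B y

noncomputable def lastOut (B : ZMod r → ZMod r → Prop) (x : ZMod r) : ZMod r := x + dplus B x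

theorem firstIn_add_dminus (B : ZMod r → ZMod r → Prop) (y : ZMod r) :
    firstIn B y + dminus B y = y :=
  sub_add_cancel _ _

theorem injOn_add_natCast_range (a : ZMod r) {l : ℕ} (hl : l ≤ r) :
    Set.InjOn (fun s : ℕ => a + (s : ZMod r)) (range l) := by
  intro s hs t ht h
  simp only [coe_range, Set.mem_Iio] at hs ht
  have := congrArg ZMod.val (add_left_cancel h)
  rwa [ZMod.val_natCast_of_lt (by omega), ZMod.val_natCast_of_lt (by omega)] at this

variable [NeZero r]

theorem mem_image_add_Icc_iff {a c : ZMod r} {l : ℕ} (hl : l < r) :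
    c ∈ (fun t : ℕ => a + (t : ZMod r)) '' Set.Icc 1 l ↔ (c - a).val ∈ Set.Icc 1 l := by
  constructor
  · rintro ⟨t, ht, rfl⟩
    rwa [add_sub_cancel_left, ZMod.val_natCast_of_lt (ht.2.trans_lt hl)]
  · exact fun h => ⟨_, h, by simp⟩

theorem mem_image_sub_Icc_iff {a c : ZMod r} {l : ℕ} (hl : l < r) :
    c ∈ (fun t : ℕ => a - (t : ZMod r)) '' Set.Icc 1 l ↔ (a - c).val ∈ Set.Icc 1 l := by
  constructor
  · rintro ⟨t, ht, rfl⟩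
    rwa [sub_sub_cancel, ZMod.val_natCast_of_lt (ht.2.trans_lt hl)]
  · exact fun h => ⟨_, h, by simp⟩

theorem val_sub_add_val_sub {a c : ZMod r} (h : a ≠ c) : (c - a).val + (a - c).val = r := by
  rw [← neg_sub c a, ZMod.neg_val, if_neg (sub_ne_zero.mpr h.symm)]
  have := ZMod.val_lt (c - a)
  omega

theorem val_sub_eq_sub_of_le {a c j : ZMod r} (h : (c - a).val ≤ (j - a).val) :
    (j - c).val = (j - a).val - (c - a).val := by
  rw [← ZMod.val_sub h, sub_sub_sub_cancel_right]

namespace IsRoundLabelling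

variable {B : ZMod r → ZMod r → Prop} (hR : IsRoundLabelling B)
include hR

theorem dplus_lt (hB : IsOriented B) (i : ZMod r) : dplus B i < r := by
  by_contra! h
  have : i ∈ Nplus B i := (hR i).1 ▸ ⟨r, ⟨NeZero.one_le, h⟩, by simp⟩
  exact hB.1 i this

theorem dminus_lt (hB : IsOriented B) (i : ZMod r) : dminus B i < r := by
  by_contra! h
  have : i ∈ Nminus B i := (hR i).2 ▸ ⟨r, ⟨NeZero.one_le, h⟩, by simp⟩
  exact hB.1 i this

theorem adj_iff_dplus (hB : IsOriented B) {a c : ZMod r} :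
    B a c ↔ (c - a).val ∈ Set.Icc 1 (dplus B a) := by
  rw [← mem_image_add_Icc_iff (hR.dplus_lt hB a), ← (hR a).1]
  rfl

theorem adj_iff_dminus (hB : IsOriented B) {a c : ZMod r} :
    B a c ↔ (c - a).val ∈ Set.Icc 1 (dminus B c) := by
  rw [← mem_image_sub_Icc_iff (hR.dminus_lt hB c), ← (hR c).2]
  rfl

theorem adj_add_natCast (hB : IsOriented B) {a : ZMod r} {t : ℕ} (h1 : 1 ≤ t)
    (ht : t ≤ dplus B a) : B a (a + t) := by
  rw [hR.adj_iff_dplus hB, add_sub_cancel_left,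
    ZMod.val_natCast_of_lt (ht.trans_lt (hR.dplus_lt hB a))]
  exact ⟨h1, ht⟩

theorem val_sub_add_dplus_lt (hB : IsOriented B) {a c : ZMod r} (h : B a c) :
    (c - a).val + dplus B c < r := by
  have hac := (hR.adj_iff_dplus hB).1 h
  have hca := mt (hR.adj_iff_dplus hB).2 (hB.2 _ _ h)
  have hsum := val_sub_add_val_sub fun e : a = c => hB.1 a (e ▸ h)
  have := hR.dplus_lt hB a
  simp only [Set.mem_Icc, not_and, not_le] at hac hca
  omega

theorem adj_of_val_sub_lt (hB : IsLocalTournament B) {a c j : ZMod r} (hac : B a c)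
    (haj : B a j) (hlt : (c - a).val < (j - a).val) : B c j := by
  have hcj : c ≠ j := by
    rintro rfl
    exact hlt.false
  refine (hB.2.1 a c j hac haj hcj).resolve_right fun hjc => ?_
  have hjc := (hR.adj_iff_dplus hB.1).1 hjc
  have := val_sub_eq_sub_of_le hlt.le
  have := val_sub_add_val_sub hcj
  have := hR.val_sub_add_dplus_lt hB.1 haj
  simp only [Set.mem_Icc] at hjc
  omega

theorem adj_firstIn (hB : IsOriented B) {y : ZMod r} (hy : dminus B y ≠ 0) :
    B (firstIn B y) y := by
  rw [hR.adj_iff_dminus hB, firstIn, sub_sub_cancel,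
    ZMod.val_natCast_of_lt (hR.dminus_lt hB y)]
  exact ⟨Nat.one_le_iff_ne_zero.mpr hy, le_rfl⟩

theorem dminus_le_dplus_firstIn (hB : IsOriented B) (y : ZMod r) :
    dminus B y ≤ dplus B (firstIn B y) := by
  rcases eq_or_ne (dminus B y) 0 with hy | hy
  · simp [hy]
  have := (hR.adj_iff_dplus hB).1 (hR.adj_firstIn hB hy)
  rw [firstIn, sub_sub_cancel, ZMod.val_natCast_of_lt (hR.dminus_lt hB y)] at this
  exact this.2

theorem val_lastOut_firstIn_sub (hB : IsOriented B) (y : ZMod r) :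
    (lastOut B (firstIn B y) - y).val = dplus B (firstIn B y) - dminus B y := by
  nth_rewrite 2 [← firstIn_add_dminus B y]
  exact val_add_natCast_sub_add_natCast _ (hR.dminus_le_dplus_firstIn hB y) (hR.dplus_lt hB _)

theorem adj_lastOut_firstIn (hB : IsLocalTournament B) {y : ZMod r}
    (h : dminus B y < dplus B (firstIn B y)) : B y (lastOut B (firstIn B y)) := by
  rcases eq_or_ne (dminus B y) 0 with hy | hy
  · have hx : firstIn B y = y := by simp [firstIn, hy]
    rw [hx] at h ⊢
    exact hR.adj_add_natCast hB.1 (by omega) le_rfl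
  refine hR.adj_of_val_sub_lt hB (hR.adj_firstIn hB.1 hy)
    (hR.adj_add_natCast hB.1 (by omega) le_rfl) ?_
  rwa [lastOut, firstIn, sub_sub_cancel, add_sub_cancel_left,
    ZMod.val_natCast_of_lt (hR.dminus_lt hB.1 y), ZMod.val_natCast_of_lt (hR.dplus_lt hB.1 _)]

theorem dplus_firstIn_le (hB : IsLocalTournament B) (y : ZMod r) :
    dplus B (firstIn B y) ≤ dminus B y + dplus B y := by
  by_contra! h
  have hyw := (hR.adj_iff_dplus hB.1).1 (hR.adj_lastOut_firstIn hB (y := y) (by omega))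
  rw [hR.val_lastOut_firstIn_sub hB.1] at hyw
  exact absurd hyw.2 (by omega)

theorem sub_dplus_firstIn_le (hB : IsLocalTournament B) (y : ZMod r) :
    dminus B y + dplus B y - dplus B (firstIn B y) ≤ dplus B (lastOut B (firstIn B y)) := by
  rcases le_or_gt (dminus B y + dplus B y) (dplus B (firstIn B y)) with h | h
  · omega
  rcases (hR.dminus_le_dplus_firstIn hB.1 y).eq_or_lt with heq | hlt
  · rw [lastOut, ← heq, firstIn_add_dminus]
    omega
  have hyw := hR.adj_lastOut_firstIn hB hlt
  have hwy := hR.val_lastOut_firstIn_sub hB.1 y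
  have hyz := hR.adj_add_natCast hB.1 (a := y) (by omega) le_rfl
  have hzy : (y + dplus B y - y).val = dplus B y := by
    rw [add_sub_cancel_left, ZMod.val_natCast_of_lt (hR.dplus_lt hB.1 y)]
  have hwz := (hR.adj_iff_dplus hB.1).1 (hR.adj_of_val_sub_lt hB hyw hyz (by omega))
  rw [val_sub_eq_sub_of_le (a := y) (by omega), hwy, hzy] at hwz
  exact hwz.2.trans' (by omega)

theorem nplus_lastOut_subset_nsecond (hB : IsOriented B) (i : ZMod r) :
    Nplus B (lastOut B i) ⊆ Nsecond B i := by
  intro j hj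
  rcases eq_or_ne (dplus B i) 0 with h0 | h0
  · have hv : lastOut B i = i := by simp [lastOut, h0]
    rw [hv] at hj
    have hij := (hR.adj_iff_dplus hB).1 hj
    simp [h0] at hij
  have hiv : B i (lastOut B i) := hR.adj_add_natCast hB (Nat.one_le_iff_ne_zero.mpr h0) le_rfl
  have hvi : (lastOut B i - i).val = dplus B i := by
    rw [lastOut, add_sub_cancel_left, ZMod.val_natCast_of_lt (hR.dplus_lt hB i)]
  have hvj := (hR.adj_iff_dplus hB).1 hj
  have hlt := hR.val_sub_add_dplus_lt hB hiv
  rw [hvi] at hlt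
  rw [Set.mem_Icc] at hvj
  refine ⟨Set.mem_biUnion hiv hj, fun hij => ?_⟩
  have hij := ((hR.adj_iff_dplus hB).1 hij).2
  rw [← sub_add_sub_cancel j (lastOut B i) i, ZMod.val_add_of_lt (by omega), hvi] at hij
  omega

variable (n : ZMod r → ℕ)

theorem arcSum_firstIn_add_le (hB : IsOriented B) (y : ZMod r) :
    arcSum n (firstIn B y) (dminus B y) + n y ≤
      n (firstIn B y) + arcSum n (firstIn B y + 1) (dplus B (firstIn B y)) :=
  calc arcSum n (firstIn B y) (dminus B y) + n y
      = arcSum n (firstIn B y) (1 + dminus B y) := by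
        rw [add_comm 1, arcSum_succ, firstIn_add_dminus]
    _ = n (firstIn B y) + arcSum n (firstIn B y + 1) (dminus B y) := arcSum_one_add ..
    _ ≤ _ := by gcongr; exact hR.dminus_le_dplus_firstIn hB y

theorem arcSum_firstIn_add_arcSum_le (hB : IsLocalTournament B) (y : ZMod r) :
    arcSum n (firstIn B y) (dminus B y) + n y + arcSum n (y + 1) (dplus B y) ≤
      n (firstIn B y) + arcSum n (firstIn B y + 1) (dplus B (firstIn B y)) +
        arcSum n (lastOut B (firstIn B y) + 1) (dplus B (lastOut B (firstIn B y))) := by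
  have hle := hR.dplus_firstIn_le hB y
  have hle' := hR.sub_dplus_firstIn_le hB y
  have hy := firstIn_add_dminus B y
  set x := firstIn B y
  have hsplit : 1 + dminus B y + dplus B y =
      1 + (dplus B x + (dminus B y + dplus B y - dplus B x)) := by
    omega
  calc arcSum n x (dminus B y) + n y + arcSum n (y + 1) (dplus B y)
      = arcSum n x (1 + dminus B y + dplus B y) := by
        rw [arcSum_add n x (1 + dminus B y), add_comm 1, arcSum_succ]
        push_cast
        rw [← add_assoc, hy]
    _ = n x + arcSum n (x + 1) (dplus B x) +
          arcSum n (lastOut B x + 1) (dminus B y + dplus B y - dplus B x) := by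
        rw [hsplit, arcSum_one_add, arcSum_add, ← add_assoc, lastOut, add_right_comm x]
    _ ≤ _ := by gcongr

theorem exists_two_mul_arcSum_le (hB : IsLocalTournament B) :
    ∃ x, 2 * arcSum n (firstIn B x) (dminus B x) ≤
      arcSum n (x + 1) (dplus B x) + arcSum n (lastOut B x + 1) (dplus B (lastOut B x)) := by
  obtain ⟨x, hx⟩ := exists_le_of_le_comp (firstIn B)
    (L := fun y => 2 * arcSum n (firstIn B y) (dminus B y) + 2 * n y + arcSum n (y + 1) (dplus B y))
    (R := fun x => 2 * n x + 2 * arcSum n (x + 1) (dplus B x) +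
      arcSum n (lastOut B x + 1) (dplus B (lastOut B x)))
    fun y => by
      have := hR.arcSum_firstIn_add_le n hB.1 y
      have := hR.arcSum_firstIn_add_arcSum_le n hB y
      omega
  exact ⟨x, by omega⟩

theorem ncard_preimage_nplus {V : Type*} [Finite V] (hB : IsOriented B) (φ : V → ZMod r)
    (c : ZMod r) :
    (φ ⁻¹' Nplus B c).ncard = arcSum (fun j => (φ ⁻¹' {j}).ncard) (c + 1) (dplus B c) := by
  rw [(hR c).1, image_add_natCast_Icc,
    ncard_preimage_image_finset φ (injOn_add_natCast_range _ (hR.dplus_lt hB c).le)]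
  rfl

theorem ncard_preimage_nminus {V : Type*} [Finite V] (hB : IsOriented B) (φ : V → ZMod r)
    (y : ZMod r) :
    (φ ⁻¹' Nminus B y).ncard =
      arcSum (fun j => (φ ⁻¹' {j}).ncard) (firstIn B y) (dminus B y) := by
  rw [(hR y).2, image_sub_natCast_Icc,
    ncard_preimage_image_finset φ (injOn_add_natCast_range _ (hR.dminus_lt hB y).le)]
  rfl

theorem exists_weightedSullivan2 {V : Type*} [Finite V] (hB : IsLocalTournament B)
    (φ : V → ZMod r) : ∃ i, WeightedSullivan2 B φ i := by
  obtain ⟨x, hx⟩ := hR.exists_two_mul_arcSum_le (fun j => (φ ⁻¹' {j}).ncard) hB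
  have hsecond := Set.ncard_le_ncard
    (Set.preimage_mono (f := φ) (hR.nplus_lastOut_subset_nsecond hB.1 x))
  rw [hR.ncard_preimage_nplus hB.1] at hsecond
  refine ⟨x, ?_⟩
  rw [WeightedSullivan2, hR.ncard_preimage_nminus hB.1, hR.ncard_preimage_nplus hB.1]
  omega

end IsRoundLabelling

end Round

theorem IsLocalTournament.comap {W' W : Type*} {B : W → W → Prop} (hB : IsLocalTournament B)
    {e : W' → W} (he : Function.Injective e) : IsLocalTournament (fun i j => B (e i) (e j)) :=
  ⟨⟨fun _ => hB.1.1 _, fun _ _ => hB.1.2 _ _⟩,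
    fun _ _ _ h₁ h₂ hne => hB.2.1 _ _ _ h₁ h₂ (he.ne hne),
    fun _ _ _ h₁ h₂ hne => hB.2.2 _ _ _ h₁ h₂ (he.ne hne)⟩

theorem WeightedSullivan2.of_equiv {V W' W : Type*} {B : W → W → Prop} {φ : V → W}
    (e : W' ≃ W) {i : W'} (h : WeightedSullivan2 (fun i j => B (e i) (e j)) (e.symm ∘ φ) i) :
    WeightedSullivan2 B φ (e i) := by
  simpa [WeightedSullivan2, Nplus, Nminus, Nsecond, Set.preimage, e.surjective.exists] using h

theorem IsRound.exists_weightedSullivan2 {V W : Type*} [Finite V] {B : W → W → Prop}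
    (hR : IsRound B) (hB : IsLocalTournament B) (φ : V → W) :
    ∃ i, WeightedSullivan2 B φ i := by
  obtain ⟨r, hr, e, he⟩ := hR
  have : NeZero r := ⟨hr.ne'⟩
  obtain ⟨i, hi⟩ := he.exists_weightedSullivan2 (hB.comap e.injective) (e.symm ∘ φ)
  exact ⟨e i, hi.of_equiv e⟩

/-- Every round decomposable local tournament has a Sullivan-2 vertex. -/
theorem round_decomposable_has_sullivan2 {V : Type*} [Fintype V]
    (A : V → V → Prop) (hA : IsLocalTournament A)
    (hrd : IsRoundDecomposable A) :
    ∃ x : V, Sullivan2 A x := by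
  obtain ⟨r, B, φ, -, hB, hround, hφ, hcross, hpart, -⟩ := hrd
  obtain ⟨i, hi⟩ := hround.exists_weightedSullivan2 hB φ
  have hfibre : IsTournament (induce A (φ ⁻¹' {i})) :=
    hA.1.isTournament_induce fun x hx y hy => hpart x y (hx.trans hy.symm)
  obtain ⟨x, hx⟩ := hφ i
  have : Nonempty (φ ⁻¹' {i}) := ⟨⟨x, hx⟩⟩
  obtain ⟨y, hy⟩ := hfibre.exists_sullivan2
  exact ⟨y, hy.of_induce hcross hB.1 hφ hi⟩
end

section
/- Let D be a local tournament with a round decomposition D = R[S_1, …, S_r], where R is a round local tournament on r ≥ 2 vertices and each S_i is a strong tournament with vertex set V_i, and let D* = R[V_1, …, V_r], where each V_i is regarded as an arcless digraph (equivalently, D* is D with all arcs inside the parts V_i deleted). If a vertex v ∈ V_j is a Sullivan-2 vertex of S_j and a Sullivan-2 vertex of D*, then v is a Sullivan-2 vertex of D. -/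
/-!
Split the arcs at `v` into those inside its part `V_j` and those between parts. Out- and
in-degrees of `v` in `D` are then the sums of those in `S_j` and in `D*`. Second
out-neighbours of `v` in `S_j` lie in `V_j`, while those in `D*` lie outside `V_j`, since a
path `v → u → w` between parts with `w ∈ V_j` would give a 2-cycle `j → φ u → j` in `R`.
Hence `d⁺⁺` is superadditive, and the two Sullivan-2 inequalities add up to the one for `D`.
-/

section Parts

variable {V ι : Type*} (A : V → V → Prop) (φ : V → ι)

def inPart (j : ι) : V → V → Prop := fun a b => A a b ∧ φ a = j ∧ φ b = j

def betweenParts : V → V → Prop := fun a b => A a b ∧ φ a ≠ φ b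

lemma mem_Nsecond (x w : V) :
    w ∈ Nsecond A x ↔ (∃ u, A x u ∧ A u w) ∧ ¬ A x w := by
  simp [Nsecond, Nplus]

variable {A φ} {j : ι} {v : V}

lemma Nplus_inPart (hv : φ v = j) :
    Nplus (inPart A φ j) v = Nplus A v ∩ φ ⁻¹' {j} := by
  ext w
  simp [Nplus, inPart, hv]

lemma Nplus_betweenParts (hv : φ v = j) :
    Nplus (betweenParts A φ) v = Nplus A v \ φ ⁻¹' {j} := by
  ext w
  simp [Nplus, betweenParts, hv, eq_comm]

lemma Nminus_inPart (hv : φ v = j) :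
    Nminus (inPart A φ j) v = Nminus A v ∩ φ ⁻¹' {j} := by
  ext w
  simp [Nminus, inPart, hv]

lemma Nminus_betweenParts (hv : φ v = j) :
    Nminus (betweenParts A φ) v = Nminus A v \ φ ⁻¹' {j} := by
  ext w
  simp [Nminus, betweenParts, hv]

lemma Nsecond_inPart_subset (hv : φ v = j) :
    Nsecond (inPart A φ j) v ⊆ Nsecond A v ∩ φ ⁻¹' {j} := by
  intro w hw
  obtain ⟨⟨u, ⟨hvu, -⟩, ⟨huw, -, hwj⟩⟩, hvw⟩ := (mem_Nsecond _ _ _).mp hw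
  exact ⟨(mem_Nsecond _ _ _).mpr ⟨⟨u, hvu, huw⟩, fun h => hvw ⟨h, hv, hwj⟩⟩, hwj⟩

lemma Nsecond_betweenParts_subset {B : ι → ι → Prop} (hB : ∀ x y, B x y → ¬ B y x)
    (hAB : ∀ x y, φ x ≠ φ y → A x y → B (φ x) (φ y)) (hv : φ v = j) :
    Nsecond (betweenParts A φ) v ⊆ Nsecond A v \ φ ⁻¹' {j} := by
  intro w hw
  obtain ⟨⟨u, ⟨hvu, hvu'⟩, ⟨huw, huw'⟩⟩, hvw⟩ := (mem_Nsecond _ _ _).mp hw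
  have hwj : φ w ≠ j := fun hwj =>
    hB _ _ (hAB v u hvu' hvu) (by rw [hv, ← hwj]; exact hAB u w huw' huw)
  exact ⟨(mem_Nsecond _ _ _).mpr ⟨⟨u, hvu, huw⟩, fun h => hvw ⟨h, hv ▸ hwj.symm⟩⟩, hwj⟩

variable [Finite V]

lemma dplus_eq_inPart_add_betweenParts (hv : φ v = j) :
    dplus A v = dplus (inPart A φ j) v + dplus (betweenParts A φ) v := by
  rw [dplus, dplus, dplus, Nplus_inPart hv, Nplus_betweenParts hv,
    Set.ncard_inter_add_ncard_sdiff_eq_ncard]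

lemma dminus_eq_inPart_add_betweenParts (hv : φ v = j) :
    dminus A v = dminus (inPart A φ j) v + dminus (betweenParts A φ) v := by
  rw [dminus, dminus, dminus, Nminus_inPart hv, Nminus_betweenParts hv,
    Set.ncard_inter_add_ncard_sdiff_eq_ncard]

lemma dsecond_inPart_add_betweenParts_le {B : ι → ι → Prop} (hB : ∀ x y, B x y → ¬ B y x)
    (hAB : ∀ x y, φ x ≠ φ y → A x y → B (φ x) (φ y)) (hv : φ v = j) :
    dsecond (inPart A φ j) v + dsecond (betweenParts A φ) v ≤ dsecond A v := by
  calc dsecond (inPart A φ j) v + dsecond (betweenParts A φ) v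
      ≤ (Nsecond A v ∩ φ ⁻¹' {j}).ncard + (Nsecond A v \ φ ⁻¹' {j}).ncard :=
        add_le_add (Set.ncard_le_ncard (Nsecond_inPart_subset hv))
          (Set.ncard_le_ncard (Nsecond_betweenParts_subset hB hAB hv))
    _ = dsecond A v := Set.ncard_inter_add_ncard_sdiff_eq_ncard _ _

lemma sullivan2_of_inPart_of_betweenParts {B : ι → ι → Prop} (hB : ∀ x y, B x y → ¬ B y x)
    (hAB : ∀ x y, φ x ≠ φ y → A x y → B (φ x) (φ y)) (hv : φ v = j)
    (hS : Sullivan2 (inPart A φ j) v) (hQ : Sullivan2 (betweenParts A φ) v) :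
    Sullivan2 A v := by
  have hplus := dplus_eq_inPart_add_betweenParts (A := A) hv
  have hminus := dminus_eq_inPart_add_betweenParts (A := A) hv
  have hsecond := dsecond_inPart_add_betweenParts_le hB hAB hv
  unfold Sullivan2 at hS hQ ⊢
  omega

end Parts

theorem sullivan2_of_part_and_quotient_general {V : Type*} [Fintype V]
    (A : V → V → Prop)
    (r : ℕ)
    (B : ZMod r → ZMod r → Prop) (hB : IsLocalTournament B)
    (φ : V → ZMod r)
    (hcomp : ∀ x y, φ x ≠ φ y → (A x y ↔ B (φ x) (φ y)))
    (j : ZMod r) (v : V) (hv : φ v = j)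
    (hS : Sullivan2 (fun a b => A a b ∧ φ a = j ∧ φ b = j) v)
    (hQ : Sullivan2 (fun a b => A a b ∧ φ a ≠ φ b) v) :
    Sullivan2 A v :=
  sullivan2_of_inPart_of_betweenParts hB.1.2 (fun x y h => (hcomp x y h).mp) hv hS hQ

/-- Let `D` (with arc relation `A`) be a local tournament with round decomposition
`D = R[S_1, …, S_r]`: `R` is a round local tournament on `r ≥ 2` vertices realized
on `ZMod r` by the relation `B`, the parts `V_i` are the fibres of the surjection
`φ : V → ZMod r`, arcs between distinct parts are exactly those induced by `B`, and
each part induces a strong tournament `S_i`.  Let `D*` be `D` with all arcs inside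
the parts deleted.  If `v ∈ V_j` is a Sullivan-2 vertex of `S_j` and a Sullivan-2
vertex of `D*`, then `v` is a Sullivan-2 vertex of `D`. -/
theorem sullivan2_of_part_and_quotient {V : Type*} [Fintype V]
    (A : V → V → Prop) (hA : IsLocalTournament A)
    (r : ℕ) (hr : 2 ≤ r)
    (B : ZMod r → ZMod r → Prop) (hB : IsLocalTournament B) (hBround : IsRound B)
    (φ : V → ZMod r) (hφ : Function.Surjective φ)
    (hcomp : ∀ x y, φ x ≠ φ y → (A x y ↔ B (φ x) (φ y)))
    (hpartsTourn : ∀ x y, φ x = φ y → x ≠ y → Adjacent A x y)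
    (hpartsStrong : ∀ i : ZMod r, ∀ x y, φ x = i → φ y = i →
      Relation.ReflTransGen (fun a b => A a b ∧ φ a = i ∧ φ b = i) x y)
    (j : ZMod r) (v : V) (hv : φ v = j)
    (hS : Sullivan2 (fun a b => A a b ∧ φ a = j ∧ φ b = j) v)
    (hQ : Sullivan2 (fun a b => A a b ∧ φ a ≠ φ b) v) :
    Sullivan2 A v :=
  sullivan2_of_part_and_quotient_general A r B hB φ hcomp j v hv hS hQ
end
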